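/- arXiv:1703.10297 — 3 statements merged into one kernel-verified Lean document; each statement's English description precedes it below -/
import Mathlib

section
/- For ω > 0, the spurious root ρ₋(ω) = ω²/(1+2ω) of the VSSBDF2 zero-stability analysis satisfies |ρ₋(ω)| ≤ 1 if and only if ω ≤ 1 + √2. -/
/-- The spurious root ρ₋(ω) = ω²/(1+2ω) satisfies |ρ₋(ω)| ≤ 1 iff ω ≤ 1 + √2. -/
theorem vssbdf2_spurious_root_bound (ω : ℝ) (hω : 0 < ω) :
    |ω ^ 2 / (1 + 2*ω)| ≤ 1 ↔ ω ≤ 1 + Real.sqrt 2 := by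
  have hd : (0:ℝ) < 1 + 2*ω := by linarith
  have hs : Real.sqrt 2 ^ 2 = 2 := Real.sq_sqrt (by norm_num)
  have hs0 : 0 ≤ Real.sqrt 2 := Real.sqrt_nonneg 2
  rw [abs_of_nonneg (div_nonneg (sq_nonneg ω) hd.le), div_le_one hd]
  constructor
  · intro h
    nlinarith [sq_nonneg (ω - 1 - Real.sqrt 2)]
  · intro h
    nlinarith [sq_nonneg (ω - 1 - Real.sqrt 2), sq_nonneg (ω - 1 + Real.sqrt 2)]
end

section
/- For fixed λ < 0 and fixed dt_old > 0 with 1 + 4λ·dt_old ≥ 0, the roots ρ±(dt_now) of the VSSBDF2 characteristic polynomial converge, as dt_now → ∞, to -(1/(2λ·dt_old))(1 ± √(1 + 4λ·dt_old)). -/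
open Filter Real Topology

/-!
Divide the numerator and the denominator of ρ± by `dt_now`. With `ω = dt_now / dt_old`,
`(1 + ω) / dt_now → 1 / dt_old`, the leading coefficient `(1 + 2ω)/(1 + ω) - λ·dt_now` grows
like `-λ·dt_now`, and the discriminant grows like `dt_now² (1 + 4λ·dt_old) / dt_old²`, because
`ω / (1 + ω) → 1`. The rescaled root is then a continuous function of these three limits.
-/

/-- The coefficient of `ρ²` in the characteristic polynomial
`a ρ² - (1 + ω) ρ + ω² / (1 + ω)`, where `ω = dt_now / dt_old`. -/
noncomputable def vssbdf2Lead (lam dtold dtnow : ℝ) : ℝ :=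
  (1 + 2 * (dtnow / dtold)) / (1 + dtnow / dtold) - lam * dtnow

noncomputable def vssbdf2Disc (lam dtold dtnow : ℝ) : ℝ :=
  (1 + dtnow / dtold) ^ 2
    - (4 * (dtnow / dtold) ^ 2 / (1 + dtnow / dtold)) * vssbdf2Lead lam dtold dtnow

theorem tendsto_add_mul_sqrt_div_two_mul {b c a : ℝ → ℝ} {B C A : ℝ} (s : ℝ)
    (hb : Tendsto (fun t => b t / t) atTop (𝓝 B))
    (hc : Tendsto (fun t => c t / t ^ 2) atTop (𝓝 C))
    (ha : Tendsto (fun t => a t / t) atTop (𝓝 A)) (hA : A ≠ 0) :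
    Tendsto (fun t => (b t + s * √(c t)) / (2 * a t)) atTop
      (𝓝 ((B + s * √C) / (2 * A))) := by
  have hlim := (hb.add ((continuous_sqrt.tendsto C).comp hc |>.const_mul s)).div
    (ha.const_mul 2) (mul_ne_zero two_ne_zero hA)
  refine hlim.congr' ?_
  filter_upwards [eventually_gt_atTop 0] with t ht
  simp only [Pi.div_apply, Function.comp_apply, sqrt_div' _ (sq_nonneg t), sqrt_sq ht.le]
  field_simp

theorem tendsto_inv_one_add_div_atTop {d : ℝ} (hd : 0 < d) :
    Tendsto (fun t => (1 + t / d)⁻¹) atTop (𝓝 0) :=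
  tendsto_inv_atTop_zero.comp <| tendsto_atTop_add_const_left _ _ <|
    tendsto_id.atTop_div_const hd

theorem tendsto_one_add_div_div_self (d : ℝ) :
    Tendsto (fun t => (1 + t / d) / t) atTop (𝓝 d⁻¹) := by
  have hlim : Tendsto (fun t : ℝ => t⁻¹ + d⁻¹) atTop (𝓝 (0 + d⁻¹)) :=
    tendsto_inv_atTop_zero.add_const _
  rw [zero_add] at hlim
  refine hlim.congr' ?_
  filter_upwards [eventually_ne_atTop 0] with t ht
  field_simp

section

variable (lam : ℝ) {d : ℝ}

theorem tendsto_vssbdf2Lead_div_self (hd : 0 < d) :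
    Tendsto (fun t => vssbdf2Lead lam d t / t) atTop (𝓝 (-lam)) := by
  have hlim : Tendsto (fun t => (2 - (1 + t / d)⁻¹) * t⁻¹ - lam) atTop (𝓝 ((2 - 0) * 0 - lam)) :=
    ((tendsto_const_nhds.sub (tendsto_inv_one_add_div_atTop hd)).mul
      tendsto_inv_atTop_zero).sub_const lam
  rw [mul_zero, zero_sub] at hlim
  refine hlim.congr' ?_
  filter_upwards [eventually_gt_atTop 0] with t ht
  have : 1 + t / d ≠ 0 := by positivity
  rw [vssbdf2Lead]
  field_simp
  ring

theorem tendsto_vssbdf2Disc_div_sq (hd : 0 < d) :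
    Tendsto (fun t => vssbdf2Disc lam d t / t ^ 2) atTop (𝓝 ((1 + 4 * lam * d) / d ^ 2)) := by
  have hlim : Tendsto (fun t => ((1 + t / d) / t) ^ 2
      - 4 * d⁻¹ * (1 - (1 + t / d)⁻¹) * (vssbdf2Lead lam d t / t)) atTop
      (𝓝 (d⁻¹ ^ 2 - 4 * d⁻¹ * (1 - 0) * -lam)) :=
    ((tendsto_one_add_div_div_self d).pow 2).sub <|
      ((tendsto_const_nhds.sub (tendsto_inv_one_add_div_atTop hd)).const_mul _).mul
        (tendsto_vssbdf2Lead_div_self lam hd)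
  convert hlim.congr' ?_ using 2
  · field_simp
    ring
  filter_upwards [eventually_gt_atTop 0] with t ht
  have : 1 + t / d ≠ 0 := by positivity
  rw [vssbdf2Disc]
  field_simp
  ring

theorem tendsto_vssbdf2_root (hlam : lam ≠ 0) (hd : 0 < d) (s : ℝ) :
    Tendsto (fun t => (1 + t / d + s * √(vssbdf2Disc lam d t)) / (2 * vssbdf2Lead lam d t))
      atTop (𝓝 (-(1 / (2 * lam * d)) * (1 + s * √(1 + 4 * lam * d)))) := by
  convert tendsto_add_mul_sqrt_div_two_mul s (tendsto_one_add_div_div_self d)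
    (tendsto_vssbdf2Disc_div_sq lam hd) (tendsto_vssbdf2Lead_div_self lam hd) (neg_ne_zero.2 hlam)
    using 2
  rw [sqrt_div' _ (sq_nonneg d), sqrt_sq hd.le]
  field_simp

end

theorem vssbdf2_roots_large_dtnow_limit_general
    (lam dtold : ℝ) (hlam : lam < 0) (hdtold : 0 < dtold) :
    Tendsto (fun dtnow : ℝ =>
        (1 + dtnow/dtold
          + Real.sqrt ((1 + dtnow/dtold)^2
              - (4*(dtnow/dtold)^2/(1 + dtnow/dtold))
                * ((1 + 2*(dtnow/dtold))/(1 + dtnow/dtold) - lam * dtnow)))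
        / (2 * ((1 + 2*(dtnow/dtold))/(1 + dtnow/dtold) - lam * dtnow)))
      atTop (nhds (-(1/(2*lam*dtold)) * (1 + Real.sqrt (1 + 4*lam*dtold)))) ∧
    Tendsto (fun dtnow : ℝ =>
        (1 + dtnow/dtold
          - Real.sqrt ((1 + dtnow/dtold)^2
              - (4*(dtnow/dtold)^2/(1 + dtnow/dtold))
                * ((1 + 2*(dtnow/dtold))/(1 + dtnow/dtold) - lam * dtnow)))
        / (2 * ((1 + 2*(dtnow/dtold))/(1 + dtnow/dtold) - lam * dtnow)))
      atTop (nhds (-(1/(2*lam*dtold)) * (1 - Real.sqrt (1 + 4*lam*dtold)))) := by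
  have hroot := tendsto_vssbdf2_root lam hlam.ne hdtold
  constructor
  · simpa [vssbdf2Disc, vssbdf2Lead] using hroot 1
  · simpa [vssbdf2Disc, vssbdf2Lead, ← sub_eq_add_neg] using hroot (-1)

/-- As dt_now → ∞ (with λ < 0, dt_old > 0 and 1 + 4λ·dt_old ≥ 0 fixed), the VSSBDF2
characteristic roots ρ±(dt_now) converge to -(1/(2λ·dt_old))(1 ± √(1 + 4λ·dt_old)). -/
theorem vssbdf2_roots_large_dtnow_limit
    (lam dtold : ℝ) (hlam : lam < 0) (hdtold : 0 < dtold)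
    (hdisc : 0 ≤ 1 + 4 * lam * dtold) :
    Tendsto (fun dtnow : ℝ =>
        (1 + dtnow/dtold
          + Real.sqrt ((1 + dtnow/dtold)^2
              - (4*(dtnow/dtold)^2/(1 + dtnow/dtold))
                * ((1 + 2*(dtnow/dtold))/(1 + dtnow/dtold) - lam * dtnow)))
        / (2 * ((1 + 2*(dtnow/dtold))/(1 + dtnow/dtold) - lam * dtnow)))
      atTop (nhds (-(1/(2*lam*dtold)) * (1 + Real.sqrt (1 + 4*lam*dtold)))) ∧
    Tendsto (fun dtnow : ℝ =>
        (1 + dtnow/dtold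
          - Real.sqrt ((1 + dtnow/dtold)^2
              - (4*(dtnow/dtold)^2/(1 + dtnow/dtold))
                * ((1 + 2*(dtnow/dtold))/(1 + dtnow/dtold) - lam * dtnow)))
        / (2 * ((1 + 2*(dtnow/dtold))/(1 + dtnow/dtold) - lam * dtnow)))
      atTop (nhds (-(1/(2*lam*dtold)) * (1 - Real.sqrt (1 + 4*lam*dtold)))) :=
  vssbdf2_roots_large_dtnow_limit_general lam dtold hlam hdtold
end

section
/- Suppose the coarse and fine approximations satisfy u_c - u(t^{n+1}) = C·dt_now²(dt_now + dt_old) and u_f - u(t^{n+1}) = C·(dt_now²(dt_now + dt_old)/8 + dt_now³/4) for some constant C. Then the linear combination α·u_c + β·u_f with α = -(dt_old + 3dt_now)/(7dt_old + 5dt_now) and β = 8(dt_old + dt_now)/(7dt_old + 5dt_now) equals u(t^{n+1}) exactly (the leading error terms cancel). -/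
/-- If the coarse and fine errors follow the stated model with common constant C,
then the extrapolation α·u_c + β·u_f recovers the exact value u(t^{n+1}). -/
theorem extrapolation_cancels_leading_error
    (dtold dtnow : ℝ) (h1 : 0 < dtold) (h2 : 0 < dtnow)
    (C u uc uf : ℝ)
    (hc : uc - u = C * (dtnow^2 * (dtnow + dtold)))
    (hf : uf - u = C * (dtnow^2 * (dtnow + dtold)/8 + dtnow^3/4)) :
    (-(dtold + 3*dtnow)/(7*dtold + 5*dtnow)) * uc
      + (8*(dtold + dtnow)/(7*dtold + 5*dtnow)) * uf = u := by
  have hd : 7*dtold + 5*dtnow ≠ 0 := by nlinarith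
  have huc : uc = u + C * (dtnow^2 * (dtnow + dtold)) := by linarith
  have huf : uf = u + C * (dtnow^2 * (dtnow + dtold)/8 + dtnow^3/4) := by linarith
  subst huc huf
  field_simp
  ring
end
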